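/- (Reduction of the second-variation condition to a condition on h(x).) At the trivial representation p(z|x) = p(z), there exists a perturbation h(z|x) with ∫ h(z|x) dz = 0 such that δ²IB_β[p(z|x)] < 0 if and only if there exists a function h(x) such that G[h(x)] < 0, where G[h(x)] = ∫ dx h(x)² p(x) − β ∫ (dy/p(y)) (∫ dx h(x) p(x) p(y|x))² + (β−1)(∫ dx h(x) p(x))². Moreover, given such an h(x), the product perturbation h(z|x) = h(x)·h₂(z), for any h₂(z) with ∫ h₂(z) dz = 0 and ∫ h₂(z)²/p(z) dz > 0, achieves δ²IB_β[p(z|x)] < 0 at the trivial representation. -/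

import Mathlib

open Filter Asymptotics
open scoped BigOperators Topology

/-- A joint probability distribution `p(x,y)` on finite types `X` and `Y`. -/
structure JointDist (X Y : Type) [Fintype X] [Fintype Y] where
  p : X → Y → ℝ
  nonneg : ∀ x y, 0 ≤ p x y
  sum_one : ∑ x, ∑ y, p x y = 1

variable {X Y Z : Type} [Fintype X] [Fintype Y] [Fintype Z]

/-- The marginal distribution `p(x)` of `X`. -/
def JointDist.pX (P : JointDist X Y) (x : X) : ℝ := ∑ y, P.p x y

/-- The marginal distribution `p(y)` of `Y`. -/
def JointDist.pY (P : JointDist X Y) (y : Y) : ℝ := ∑ x, P.p x y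

/-- An encoder: a conditional distribution `p(z|x)` specifying a representation `Z` of `X`;
together with `p(x,y)` it determines the Markov chain `Z ← X ↔ Y`. -/
structure Encoder (X Z : Type) [Fintype X] [Fintype Z] where
  c : X → Z → ℝ
  nonneg : ∀ x z, 0 ≤ c x z
  sum_one : ∀ x, ∑ z, c x z = 1

/-- The mutual information `I(X;Z)` of the representation given by encoder `e`,
where `p(x,z) = p(x) p(z|x)` and `p(z) = ∑ x, p(x) p(z|x)`. -/
noncomputable def IXZ (P : JointDist X Y) (e : Encoder X Z) : ℝ :=
  ∑ x, ∑ z, P.pX x * e.c x z *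
    Real.log (P.pX x * e.c x z / (P.pX x * ∑ x', P.pX x' * e.c x' z))

/-- The mutual information `I(Y;Z)`, using the Markov chain `Z ← X ↔ Y`,
i.e. `p(y,z) = ∑ x, p(x,y) p(z|x)`. -/
noncomputable def IYZ (P : JointDist X Y) (e : Encoder X Z) : ℝ :=
  ∑ y, ∑ z, (∑ x, P.p x y * e.c x z) *
    Real.log ((∑ x, P.p x y * e.c x z) / (P.pY y * ∑ x, P.pX x * e.c x z))

/-- The Information Bottleneck objective `IB_β(X,Y;Z) = I(X;Z) − β·I(Y;Z)`. -/
noncomputable def IB (P : JointDist X Y) (β : ℝ) (e : Encoder X Z) : ℝ :=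
  IXZ P e - β * IYZ P e

/-- `(X,Y)` is `IB_β`-learnable if some representation `Z` (given by some encoder `p₁(z|x)`)
achieves `IB_β(X,Y;Z) < 0`, where `0` is the value attained by the trivial representation
`p(z|x) = p(z)`. -/
def IBLearnable (P : JointDist X Y) (β : ℝ) : Prop :=
  ∃ (n : ℕ) (e : Encoder X (Fin n)), IB P β e < 0

/-- The second-order variation `δ²IB_β[p(z|x)]` of the IB objective, evaluated at the trivial
representation `p(z|x) = q(z)` (where `p(x,z) = p(x)q(z)` and `p(y,z) = p(y)q(z)`), for a
perturbation `h(z|x)`: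
`δ²IB_β = (1/2)[ ∑ p(x)/q(z) h(z|x)² − β ∑ p(x,y)p(x',y)/(p(y)q(z)) h(z|x)h(z|x')`
`+ (β−1) ∑ p(x)p(x')/q(z) h(z|x)h(z|x') ]`. -/
noncomputable def delta2IBtrivial (P : JointDist X Y) (β : ℝ) (q : Z → ℝ)
    (h : X → Z → ℝ) : ℝ :=
  (1 / 2) * ((∑ x, ∑ z, P.pX x / q z * (h x z) ^ 2)
    - β * (∑ x, ∑ x', ∑ y, ∑ z,
        P.p x y * P.p x' y / (P.pY y * q z) * (h x z * h x' z))
    + (β - 1) * (∑ x, ∑ x', ∑ z, P.pX x * P.pX x' / q z * (h x z * h x' z)))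

/-- The functional `G[h(x)] = ∑ h(x)² p(x) − β ∑_y (1/p(y)) (∑_x h(x) p(x) p(y|x))²`
`+ (β−1)(∑_x h(x) p(x))²` (note `p(x)p(y|x) = p(x,y)`). -/
noncomputable def Gfunc (P : JointDist X Y) (β : ℝ) (h : X → ℝ) : ℝ :=
  (∑ x, (h x) ^ 2 * P.pX x)
    - β * (∑ y, (1 / P.pY y) * (∑ x, h x * P.p x y) ^ 2)
    + (β - 1) * (∑ x, h x * P.pX x) ^ 2

/-! At the trivial encoder the second variation decouples over `z`: it equals
`½ ∑_z G[h(·, z)] / q(z)`. So a negative second variation forces `G < 0` on some slice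
`h(·, z)`, and conversely a product perturbation `h(x) h₂(z)` has second variation
`½ (∑_z h₂(z)² / q(z)) G[h]`; a zero-sum `h₂` with positive weight exists as soon as `Z` has two
letters, e.g. `δ_{z₀} - δ_{z₁}`. -/

open Finset

section SecondVariation

variable (P : JointDist X Y) (β : ℝ)

theorem Gfunc_mul_const (h : X → ℝ) (c : ℝ) :
    Gfunc P β (fun x => h x * c) = c ^ 2 * Gfunc P β h := by
  simp only [Gfunc, mul_pow, mul_right_comm _ c, mul_right_comm _ (c ^ 2), ← sum_mul, ← mul_assoc]
  ring

theorem delta2IBtrivial_eq_sum_Gfunc (q : Z → ℝ) (h : X → Z → ℝ) :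
    delta2IBtrivial P β q h = 1 / 2 * ∑ z, Gfunc P β (fun x => h x z) / q z := by
  have sq_term : ∑ x, ∑ z, P.pX x / q z * h x z ^ 2 = ∑ z, (∑ x, h x z ^ 2 * P.pX x) / q z := by
    rw [sum_comm]
    simp only [sum_div]
    refine sum_congr rfl fun z _ => sum_congr rfl fun x _ => ?_
    ring
  have joint_term :
      ∑ x, ∑ x', ∑ y, ∑ z, P.p x y * P.p x' y / (P.pY y * q z) * (h x z * h x' z)
        = ∑ z, (∑ y, 1 / P.pY y * (∑ x, h x z * P.p x y) ^ 2) / q z := by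
    rw [sum_congr rfl fun x _ => sum_comm_cycle, sum_comm]
    refine sum_congr rfl fun z _ => ?_
    rw [sum_comm_cycle]
    simp only [sq, sum_mul_sum]
    simp only [mul_sum, sum_div]
    refine sum_congr rfl fun y _ => sum_congr rfl fun x _ => sum_congr rfl fun x' _ => ?_
    field_simp
  have marginal_term : ∑ x, ∑ x', ∑ z, P.pX x * P.pX x' / q z * (h x z * h x' z)
      = ∑ z, (∑ x, h x z * P.pX x) ^ 2 / q z := by
    rw [sum_comm_cycle]
    simp only [sq, sum_mul_sum, sum_div]
    refine sum_congr rfl fun z _ => sum_congr rfl fun x _ => sum_congr rfl fun x' _ => ?_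
    ring
  rw [delta2IBtrivial, sq_term, joint_term, marginal_term]
  simp only [Gfunc, add_div, sub_div, mul_div_assoc, sum_add_distrib, sum_sub_distrib, ← mul_sum]

theorem delta2IBtrivial_mul (q : Z → ℝ) (h : X → ℝ) (h₂ : Z → ℝ) :
    delta2IBtrivial P β q (fun x z => h x * h₂ z)
      = 1 / 2 * (∑ z, h₂ z ^ 2 / q z) * Gfunc P β h := by
  simp only [delta2IBtrivial_eq_sum_Gfunc, Gfunc_mul_const, mul_assoc, sum_mul]
  refine congrArg _ (sum_congr rfl fun z _ => ?_)
  ring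

theorem exists_Gfunc_neg_of_delta2IBtrivial_neg {q : Z → ℝ} (hq : ∀ z, 0 ≤ q z)
    {h : X → Z → ℝ} (hneg : delta2IBtrivial P β q h < 0) :
    ∃ z, Gfunc P β (fun x => h x z) < 0 := by
  rw [delta2IBtrivial_eq_sum_Gfunc] at hneg
  obtain ⟨z, -, hz⟩ := exists_lt_of_sum_lt (s := univ) (g := fun _ => (0 : ℝ))
    (by simpa using neg_of_mul_neg_right hneg (by norm_num))
  exact ⟨z, neg_of_div_neg_left hz (hq z)⟩

end SecondVariation

theorem exists_sum_eq_zero_sum_sq_div_pos [Nontrivial Z] {q : Z → ℝ} (hq : ∀ z, 0 < q z) :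
    ∃ h₂ : Z → ℝ, ∑ z, h₂ z = 0 ∧ 0 < ∑ z, h₂ z ^ 2 / q z := by
  classical
  obtain ⟨z₀, z₁, hne⟩ := exists_pair_ne Z
  refine ⟨Pi.single z₀ 1 - Pi.single z₁ 1, by simp, ?_⟩
  refine sum_pos' (fun z _ => div_nonneg (sq_nonneg _) (hq z).le) ⟨z₀, mem_univ _, ?_⟩
  simpa [hne] using hq z₀

theorem neg_second_variation_iff_Gfunc_general (P : JointDist X Y) (β : ℝ)
    (hZ : 2 ≤ Fintype.card Z)
    (q : Z → ℝ) (hq : ∀ z, 0 < q z) :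
    ((∃ h : X → Z → ℝ, (∀ x, ∑ z, h x z = 0) ∧ delta2IBtrivial P β q h < 0) ↔
      ∃ h : X → ℝ, Gfunc P β h < 0) ∧
    ∀ h : X → ℝ, Gfunc P β h < 0 →
      ∀ h₂ : Z → ℝ, (∑ z, h₂ z = 0) → (0 < ∑ z, (h₂ z) ^ 2 / q z) →
        delta2IBtrivial P β q (fun x z => h x * h₂ z) < 0 := by
  have product_neg : ∀ h : X → ℝ, Gfunc P β h < 0 → ∀ h₂ : Z → ℝ,
      0 < ∑ z, h₂ z ^ 2 / q z → delta2IBtrivial P β q (fun x z => h x * h₂ z) < 0 :=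
    fun h hG h₂ hpos => by
      rw [delta2IBtrivial_mul]
      exact mul_neg_of_pos_of_neg (by positivity) hG
  refine ⟨⟨fun ⟨h, _, hneg⟩ => ?_, fun ⟨h, hG⟩ => ?_⟩,
    fun h hG h₂ _ hpos => product_neg h hG h₂ hpos⟩
  · obtain ⟨z, hz⟩ := exists_Gfunc_neg_of_delta2IBtrivial_neg P β (fun z => (hq z).le) hneg
    exact ⟨fun x => h x z, hz⟩
  · have : Nontrivial Z := Fintype.one_lt_card_iff_nontrivial.mp hZ
    obtain ⟨h₂, hsum, hpos⟩ := exists_sum_eq_zero_sum_sq_div_pos hq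
    exact ⟨fun x z => h x * h₂ z, fun x => by rw [← mul_sum, hsum, mul_zero],
      product_neg h hG h₂ hpos⟩

/-- (Reduction of the second-variation condition to a condition on `h(x)`.)
At the trivial representation `p(z|x) = q(z)` (on a representation alphabet with at least two
elements), there exists a perturbation `h(z|x)` with `∑ z, h(z|x) = 0` such that
`δ²IB_β[p(z|x)] < 0` if and only if there exists a function `h(x)` with `G[h(x)] < 0`.
Moreover, given such an `h(x)`, the product perturbation `h(z|x) = h(x)·h₂(z)` — for any `h₂`
with `∑ z, h₂(z) = 0` and `∑ z, h₂(z)²/q(z) > 0` — achieves `δ²IB_β < 0` at the trivial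
representation. -/
theorem neg_second_variation_iff_Gfunc (P : JointDist X Y) (β : ℝ)
    (hZ : 2 ≤ Fintype.card Z)
    (q : Z → ℝ) (hq : ∀ z, 0 < q z) (hq1 : ∑ z, q z = 1) :
    ((∃ h : X → Z → ℝ, (∀ x, ∑ z, h x z = 0) ∧ delta2IBtrivial P β q h < 0) ↔
      ∃ h : X → ℝ, Gfunc P β h < 0) ∧
    ∀ h : X → ℝ, Gfunc P β h < 0 →
      ∀ h₂ : Z → ℝ, (∑ z, h₂ z = 0) → (0 < ∑ z, (h₂ z) ^ 2 / q z) →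
        delta2IBtrivial P β q (fun x z => h x * h₂ z) < 0 :=
  neg_second_variation_iff_Gfunc_general P β hZ q hq
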